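/- (Theorem 3.17) Let α : ℝ → ℝ³ be a unit-speed spacelike Frenet curve with timelike principal normal, with frame (T, N, B) and curvatures κ, τ, and let Θ : ℝ → ℝ be an antiderivative of τ/κ. Define β(s) = α(s) − (1/κ(s))·N(s) + Θ(s)·B(s). Then β′(s) = (−(1/κ)′(s) + Θ(s)·τ(s))·N(s) for all s; in particular β′ is parallel to the timelike vector N. Moreover, assuming −(1/κ)′(s) + Θ(s)·τ(s) > 0 for all s, β is a timelike curve, and there exists a fixed nonzero vector d ∈ ℝ³ such that s ↦ η(β′(s)/‖β′(s)‖, d) is constant if and only if there exists a fixed nonzero vector d ∈ ℝ³ such that s ↦ η(N(s), d) is constant; that is, β is a timelike general helix if and only if α is a spacelike slant helix. -/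

import Mathlib

noncomputable section

/-- Lorentzian inner product on Minkowski 3-space. -/
def eta (u v : Fin 3 → ℝ) : ℝ := -(u 0 * v 0) + u 1 * v 1 + u 2 * v 2

/-- Lorentzian norm. -/
def lnorm (u : Fin 3 → ℝ) : ℝ := Real.sqrt |eta u u|

lemma eta_smul_smul (a b : ℝ) (u v : Fin 3 → ℝ) :
    eta (a • u) (b • v) = a * b * eta u v := by
  simp [eta, Pi.smul_apply, smul_eq_mul]; ring

lemma eta_smul_left (a : ℝ) (u v : Fin 3 → ℝ) :
    eta (a • u) v = a * eta u v := by
  simp [eta, Pi.smul_apply, smul_eq_mul]; ring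

theorem stmt14
    (α T N B : ℝ → Fin 3 → ℝ) (κ τ : ℝ → ℝ)
    (hαC : ContDiff ℝ (⊤ : ℕ∞) α) (hTC : ContDiff ℝ (⊤ : ℕ∞) T) (hNC : ContDiff ℝ (⊤ : ℕ∞) N)
    (hBC : ContDiff ℝ (⊤ : ℕ∞) B) (hκC : ContDiff ℝ (⊤ : ℕ∞) κ) (hτC : ContDiff ℝ (⊤ : ℕ∞) τ)
    (hT : ∀ s, deriv α s = T s)
    (hTT : ∀ s, eta (T s) (T s) = 1)
    (hNN : ∀ s, eta (N s) (N s) = -1)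
    (hBB : ∀ s, eta (B s) (B s) = 1)
    (hTN : ∀ s, eta (T s) (N s) = 0)
    (hTB : ∀ s, eta (T s) (B s) = 0)
    (hNB : ∀ s, eta (N s) (B s) = 0)
    (hκ : ∀ s, 0 < κ s)
    (hFr1 : ∀ s, deriv T s = κ s • N s)
    (hFr2 : ∀ s, deriv N s = κ s • T s + τ s • B s)
    (hFr3 : ∀ s, deriv B s = τ s • N s)
    (Θ : ℝ → ℝ) (hΘ : ∀ s, HasDerivAt Θ (τ s / κ s) s)
    (β : ℝ → Fin 3 → ℝ)
    (hβ : ∀ s, β s = α s - (κ s)⁻¹ • N s + Θ s • B s) :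
    (∀ s, deriv β s = (-(deriv (fun u => (κ u)⁻¹) s) + Θ s * τ s) • N s) ∧
    ((∀ s, 0 < -(deriv (fun u => (κ u)⁻¹) s) + Θ s * τ s) →
      ((∀ s, eta (deriv β s) (deriv β s) < 0) ∧
       ((∃ d : Fin 3 → ℝ, d ≠ 0 ∧ ∃ c : ℝ, ∀ s, eta ((lnorm (deriv β s))⁻¹ • deriv β s) d = c) ↔ (∃ d : Fin 3 → ℝ, d ≠ 0 ∧ ∃ c : ℝ, ∀ s, eta (N s) d = c)))) := by
  have hβf : β = fun s => α s - (κ s)⁻¹ • N s + Θ s • B s := funext hβ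
  have hderiv : ∀ s, deriv β s = (-(deriv (fun u => (κ u)⁻¹) s) + Θ s * τ s) • N s := by
    intro s
    have hκne : κ s ≠ 0 := (hκ s).ne'
    have hκinv : HasDerivAt (fun u => (κ u)⁻¹) (deriv (fun u => (κ u)⁻¹) s) s :=
      ((hκC.differentiable (by simp) s).inv hκne).hasDerivAt
    have hN' : HasDerivAt N (deriv N s) s := (hNC.differentiable (by simp) s).hasDerivAt
    have hB' : HasDerivAt B (deriv B s) s := (hBC.differentiable (by simp) s).hasDerivAt
    have hα' : HasDerivAt α (T s) s := by
      have := (hαC.differentiable (by simp) s).hasDerivAt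
      rwa [hT s] at this
    have h1 : HasDerivAt (fun u => (κ u)⁻¹ • N u)
        ((κ s)⁻¹ • deriv N s + deriv (fun u => (κ u)⁻¹) s • N s) s := hκinv.smul hN'
    have h2 : HasDerivAt (fun u => Θ u • B u)
        (Θ s • deriv B s + (τ s / κ s) • B s) s := (hΘ s).smul hB'
    have h : HasDerivAt β
        (T s - ((κ s)⁻¹ • deriv N s + deriv (fun u => (κ u)⁻¹) s • N s)
          + (Θ s • deriv B s + (τ s / κ s) • B s)) s := by
      rw [hβf]; exact (hα'.sub h1).add h2
    rw [h.deriv, hFr2 s, hFr3 s]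
    have hkey : (κ s)⁻¹ • (κ s • T s + τ s • B s) = T s + (τ s / κ s) • B s := by
      rw [smul_add, smul_smul, inv_mul_cancel₀ hκne, one_smul, smul_smul, div_eq_inv_mul]
    rw [hkey, smul_smul]
    module
  refine ⟨hderiv, fun hpos => ?_⟩
  set f : ℝ → ℝ := fun s => -(deriv (fun u => (κ u)⁻¹) s) + Θ s * τ s with hf
  have hetaβ : ∀ s, eta (deriv β s) (deriv β s) = -(f s * f s) := by
    intro s
    rw [hderiv s, eta_smul_smul, hNN s]
    ring
  have hneg : ∀ s, eta (deriv β s) (deriv β s) < 0 := by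
    intro s
    rw [hetaβ s]
    have h2 : 0 < f s * f s := mul_pos (hpos s) (hpos s)
    linarith
  refine ⟨hneg, ?_⟩
  have hnorm : ∀ s, (lnorm (deriv β s))⁻¹ • deriv β s = N s := by
    intro s
    have hl : lnorm (deriv β s) = f s := by
      rw [lnorm, hetaβ s, abs_neg, abs_of_nonneg (mul_self_nonneg _),
        Real.sqrt_mul_self (hpos s).le]
    rw [hl, hderiv s, smul_smul, inv_mul_cancel₀ (hpos s).ne', one_smul]
  constructor
  · rintro ⟨d, hd, c, hc⟩
    exact ⟨d, hd, c, fun s => by rw [← hnorm s]; exact hc s⟩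
  · rintro ⟨d, hd, c, hc⟩
    exact ⟨d, hd, c, fun s => by rw [hnorm s]; exact hc s⟩
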